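/- arXiv:2502.10199 — 5 statements merged into one kernel-verified Lean document; each statement's English description precedes it below -/
import Mathlib

section
/- The one-step Hug map Ψ_δ : ℝⁿ×ℝⁿ → ℝⁿ×ℝⁿ, defined by Ψ_δ(x,v) = (x′,v′) with v′ = R(x+(δ/2)v)v and x′ = x+(δ/2)v+(δ/2)v′, preserves Lebesgue measure (volume) on ℝⁿ×ℝⁿ. -/
open Matrix MeasureTheory

noncomputable section

abbrev Evec (n : ℕ) : Type := EuclideanSpace ℝ (Fin n)

/-- Apply a matrix to a vector of Euclidean space. -/
def mvE {m n : ℕ} (A : Matrix (Fin m) (Fin n) ℝ) (v : Evec n) : Evec m :=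
  Matrix.toEuclideanLin A v

/-- Moore–Penrose pseudoinverse `Aᵀ(AAᵀ)⁻¹` of a full-rank wide matrix. -/
def pinv {m n : ℕ} (A : Matrix (Fin m) (Fin n) ℝ) : Matrix (Fin n) (Fin m) ℝ :=
  Aᵀ * (A * Aᵀ)⁻¹

/-- Orthogonal projection onto the normal space: `N = A⁺A`. -/
def Nproj {m n : ℕ} (A : Matrix (Fin m) (Fin n) ℝ) : Matrix (Fin n) (Fin n) ℝ :=
  pinv A * A

/-- Orthogonal projection onto the tangent space: `T = I - N`. -/
def Tproj {m n : ℕ} (A : Matrix (Fin m) (Fin n) ℝ) : Matrix (Fin n) (Fin n) ℝ :=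
  1 - Nproj A

/-- Reflection: `R = I - 2N`. -/
def Rrefl {m n : ℕ} (A : Matrix (Fin m) (Fin n) ℝ) : Matrix (Fin n) (Fin n) ℝ :=
  1 - (2 : ℝ) • Nproj A

/-- One step of the Hug integrator. -/
def hugStep {m n : ℕ} (J : Evec n → Matrix (Fin m) (Fin n) ℝ) (δ : ℝ)
    (p : Evec n × Evec n) : Evec n × Evec n :=
  let xh := p.1 + (δ / 2) • p.2
  let v' := mvE (Rrefl (J xh)) p.2
  (xh + (δ / 2) • v', v')


/-! The Hug step is the composition `S ∘ Φ ∘ S` of the shear `S (x, v) = (x + (δ/2) v, v)` with the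
fibrewise map `Φ (x, v) = (x, R(x) v)`. The shear preserves Lebesgue measure by Fubini and
translation invariance, and `Φ` does because each `R(x)` is an involution, so `|det R(x)| = 1`;
`x ↦ R(x)` is measurable because derivatives are. -/

namespace Matrix

theorem continuous_toEuclideanLin_apply {ι κ : Type*} [Fintype κ] [DecidableEq κ] :
    Continuous fun p : Matrix ι κ ℝ × EuclideanSpace ℝ κ => toEuclideanLin p.1 p.2 :=
  (PiLp.continuous_toLp 2 _).comp
    (continuous_fst.matrix_mulVec ((PiLp.continuous_ofLp 2 _).comp continuous_snd))

variable {ι κ : Type*} [Fintype ι] [Fintype κ]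

/- Mathlib puts the product topology on matrices but no measurable structure; we use the
matching product σ-algebra, which is then Borel. -/
instance : MeasurableSpace (Matrix ι κ ℝ) := inferInstanceAs (MeasurableSpace (ι → κ → ℝ))

instance : BorelSpace (Matrix ι κ ℝ) := inferInstanceAs (BorelSpace (ι → κ → ℝ))

instance : SecondCountableTopology (Matrix ι κ ℝ) :=
  inferInstanceAs (SecondCountableTopology (ι → κ → ℝ))

theorem _root_.Measurable.toEuclideanLin_apply [DecidableEq κ] {α : Type*} [MeasurableSpace α]
    {R : α → Matrix ι κ ℝ} {v : α → EuclideanSpace ℝ κ} (hR : Measurable R) (hv : Measurable v) :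
    Measurable fun a => toEuclideanLin (R a) (v a) :=
  (continuous_toEuclideanLin_apply.measurable.comp (hR.prodMk hv) :)

theorem measurable_nonsing_inv [DecidableEq ι] : Measurable (fun A : Matrix ι ι ℝ => A⁻¹) := by
  simp only [inv_def, Ring.inverse_eq_inv']
  exact continuous_id.matrix_det.measurable.inv.smul continuous_id.matrix_adjugate.measurable

theorem isUnit_of_rank_eq_card {K : Type*} [Field K] [DecidableEq ι] {M : Matrix ι ι K}
    (h : M.rank = Fintype.card ι) : IsUnit M := by
  rw [← mulVec_surjective_iff_isUnit]
  refine LinearMap.range_eq_top.mp (Submodule.eq_top_of_finrank_eq (S := M.mulVecLin.range) ?_)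
  rw [← rank, h, Module.finrank_fintype_fun_eq_card]

theorem isUnit_mul_transpose_of_rank_eq_card [DecidableEq ι] {A : Matrix ι κ ℝ}
    (h : A.rank = Fintype.card ι) : IsUnit (A * Aᵀ) :=
  isUnit_of_rank_eq_card (by rw [rank_self_mul_transpose, h])

theorem abs_det_eq_one_of_mul_self_eq_one [DecidableEq ι] {A : Matrix ι ι ℝ} (h : A * A = 1) :
    |A.det| = 1 := by
  have : A.det * A.det = 1 := by rw [← det_mul, h, det_one]
  rcases mul_self_eq_one_iff.mp this with h1 | h1 <;> simp [h1]

theorem measurePreserving_toEuclideanLin [DecidableEq ι] {A : Matrix ι ι ℝ} (h : |A.det| = 1) :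
    MeasurePreserving (toEuclideanLin A) := by
  have hdet : LinearMap.det (toEuclideanLin A) = A.det := by
    rw [toEuclideanLin_eq_toLin_orthonormal, LinearMap.det_toLin]
  have hA : A.det ≠ 0 := abs_ne_zero.mp (by rw [h]; exact one_ne_zero)
  refine ⟨(toEuclideanLin A).continuous_of_finiteDimensional.measurable, ?_⟩
  rw [Measure.map_linearMap_addHaar_eq_smul_addHaar _ (hdet ▸ hA), hdet, abs_inv, h]
  simp

theorem measurePreserving_prod_toEuclideanLin [DecidableEq ι] {α : Type*} [MeasurableSpace α]
    (μ : Measure α) [SFinite μ] {R : α → Matrix ι ι ℝ} (hR : Measurable R)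
    (hdet : ∀ a, |(R a).det| = 1) :
    MeasurePreserving (fun p : α × EuclideanSpace ℝ ι => (p.1, toEuclideanLin (R p.1) p.2))
      (μ.prod volume) (μ.prod volume) :=
  (MeasurePreserving.id μ).skew_product (g := fun a => toEuclideanLin (R a))
    ((hR.comp measurable_fst).toEuclideanLin_apply measurable_snd)
    (Filter.Eventually.of_forall fun a => (measurePreserving_toEuclideanLin (hdet a)).map_eq)

end Matrix

section Reflection

variable {m n : ℕ} {A : Matrix (Fin m) (Fin n) ℝ}

theorem Nproj_mul_self (h : A.rank = m) : Nproj A * Nproj A = Nproj A := by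
  have hdet : IsUnit (A * Aᵀ).det :=
    (isUnit_iff_isUnit_det _).mp (isUnit_mul_transpose_of_rank_eq_card (by simpa using h))
  calc Nproj A * Nproj A = Aᵀ * (A * Aᵀ)⁻¹ * ((A * Aᵀ) * ((A * Aᵀ)⁻¹ * A)) := by
        simp only [Nproj, pinv, Matrix.mul_assoc]
    _ = Nproj A := by rw [mul_nonsing_inv_cancel_left _ _ hdet]; rfl

theorem Rrefl_mul_self (h : A.rank = m) : Rrefl A * Rrefl A = 1 := by
  simp only [Rrefl, sub_mul, mul_sub, one_mul, mul_one, smul_mul_assoc, mul_smul_comm,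
    Nproj_mul_self h]
  module

theorem measurable_Rrefl : Measurable (Rrefl : Matrix (Fin m) (Fin n) ℝ → _) := by
  have hF : Continuous fun p : Matrix (Fin m) (Fin n) ℝ × Matrix (Fin m) (Fin m) ℝ =>
      1 - (2 : ℝ) • (p.1ᵀ * p.2 * p.1) :=
    continuous_const.sub (((continuous_fst.matrix_transpose.matrix_mul continuous_snd).matrix_mul
      continuous_fst).const_smul (2 : ℝ))
  have hG : Measurable fun B : Matrix (Fin m) (Fin n) ℝ => (B * Bᵀ)⁻¹ :=
    measurable_nonsing_inv.comp (continuous_id.matrix_mul continuous_id.matrix_transpose).measurable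
  exact (hF.measurable.comp (measurable_id.prodMk hG) :)

end Reflection

theorem measurable_of_hasFDerivAt_toEuclideanLin {ι κ : Type*} [Fintype ι] [Fintype κ]
    [DecidableEq κ]
    {f : EuclideanSpace ℝ κ → EuclideanSpace ℝ ι} {J : EuclideanSpace ℝ κ → Matrix ι κ ℝ}
    (hJ : ∀ x, HasFDerivAt f (toEuclideanLin (J x)).toContinuousLinearMap x) : Measurable J := by
  let toMatrix : (EuclideanSpace ℝ κ →L[ℝ] EuclideanSpace ℝ ι) →ₗ[ℝ] Matrix ι κ ℝ :=
    toEuclideanLin.symm.toLinearMap ∘ₗ ContinuousLinearMap.coeLM ℝ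
  have hJ_eq : J = toMatrix ∘ fderiv ℝ f := by
    funext x
    simp [toMatrix, (hJ x).fderiv]
  rw [hJ_eq]
  exact toMatrix.continuous_of_finiteDimensional.measurable.comp (measurable_fderiv ℝ f)

theorem measurePreserving_shear {E β : Type*} [AddGroup E] [MeasurableSpace E] [MeasurableAdd₂ E]
    [MeasurableSpace β] (μ : Measure E) (ν : Measure β) [SFinite μ] [SFinite ν]
    [μ.IsAddRightInvariant] {g : β → E} (hg : Measurable g) :
    MeasurePreserving (fun p : E × β => (p.1 + g p.2, p.2)) (μ.prod ν) (μ.prod ν) := by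
  have hskew : MeasurePreserving (fun q : β × E => (q.1, q.2 + g q.1)) (ν.prod μ) (ν.prod μ) :=
    (MeasurePreserving.id ν).skew_product (measurable_snd.add (hg.comp measurable_fst))
      (Filter.Eventually.of_forall fun b => map_add_right_eq_self μ (g b))
  exact Measure.measurePreserving_swap.comp (hskew.comp Measure.measurePreserving_swap)

theorem hug_step_measure_preserving_general
    (m n : ℕ)
    (f : Evec n → Evec m)
    (J : Evec n → Matrix (Fin m) (Fin n) ℝ)
    (hJ : ∀ x, HasFDerivAt f
      (LinearMap.toContinuousLinearMap (Matrix.toEuclideanLin (J x))) x)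
    (hrank : ∀ x, (J x).rank = m)
    (δ : ℝ) :
    MeasurePreserving (hugStep J δ) volume volume := by
  have hshear : MeasurePreserving (fun p : Evec n × Evec n => (p.1 + (δ / 2) • p.2, p.2)) :=
    measurePreserving_shear volume volume (measurable_const_smul _)
  have hreflect : MeasurePreserving (fun p : Evec n × Evec n => (p.1, mvE (Rrefl (J p.1)) p.2)) :=
    measurePreserving_prod_toEuclideanLin volume (R := fun x => Rrefl (J x))
      (measurable_Rrefl.comp (measurable_of_hasFDerivAt_toEuclideanLin hJ))
      fun x => abs_det_eq_one_of_mul_self_eq_one (Rrefl_mul_self (hrank x))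
  exact hshear.comp (hreflect.comp hshear)

theorem hug_step_measure_preserving
    (m n : ℕ) (hm : 0 < m) (hmn : m < n)
    (f : Evec n → Evec m) (hf : ContDiff ℝ (⊤ : ℕ∞) f)
    (J : Evec n → Matrix (Fin m) (Fin n) ℝ)
    (hJ : ∀ x, HasFDerivAt f
      (LinearMap.toContinuousLinearMap (Matrix.toEuclideanLin (J x))) x)
    (hrank : ∀ x, (J x).rank = m)
    (δ : ℝ) (hδ : 0 < δ) :
    MeasurePreserving (hugStep J δ) volume volume :=
  hug_step_measure_preserving_general m n f J hJ hrank δ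

end
end

section
/- The Hug ODE is time-reversible: if (x(t), v(t)) is a solution of the Hug ODE on an interval I, then (x̃(t), ṽ(t)) := (x(−t), −v(−t)) is a solution of the same system on −I. -/
open Matrix MeasureTheory

noncomputable section

/-- Golub–Pereyra term `N′_⊥(x)[w] = J(x)⁺ H(x)[w,·] T(x)` (as a matrix),
built from the Jacobian matrix `A = J(x)` and the matrix `Hw = H(x)[w,·]`. -/
def Nperp' {m n : ℕ} (A Hw : Matrix (Fin m) (Fin n) ℝ) : Matrix (Fin n) (Fin n) ℝ :=
  pinv A * Hw * Tproj A

/-- Golub–Pereyra term `N′_∥(x)[w] = (N′_⊥(x)[w])ᵀ`. -/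
def Npar' {m n : ℕ} (A Hw : Matrix (Fin m) (Fin n) ℝ) : Matrix (Fin n) (Fin n) ℝ :=
  (Nperp' A Hw)ᵀ

/-- The right-hand side of the velocity equation of the Hug ODE:
`(N′_∥(x)[(T(x)−N(x))v] − N′_⊥(x)[(T(x)−N(x))v]) v`. -/
def hugVField {m n : ℕ} (J : Evec n → Matrix (Fin m) (Fin n) ℝ)
    (Hm : Evec n → Evec n → Matrix (Fin m) (Fin n) ℝ) (x v : Evec n) : Evec n :=
  mvE (Npar' (J x) (Hm x (mvE (Tproj (J x) - Nproj (J x)) v))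
      - Nperp' (J x) (Hm x (mvE (Tproj (J x) - Nproj (J x)) v))) v

lemma HasDerivAt.comp_neg {𝕜 F : Type*} [NontriviallyNormedField 𝕜] [NormedAddCommGroup F]
    [NormedSpace 𝕜 F] {γ : 𝕜 → F} {γ' : F} {t : 𝕜} (h : HasDerivAt γ γ' t) :
    HasDerivAt (fun s ↦ γ (-s)) (-γ') (-t) := by
  have h' : HasDerivAt γ γ' (-(-t)) := by rwa [neg_neg]
  simpa [Function.comp_def] using h'.scomp (-t) (hasDerivAt_neg (-t))

lemma mvE_neg {m n : ℕ} (A : Matrix (Fin m) (Fin n) ℝ) (v : Evec n) :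
    mvE A (-v) = -mvE A v :=
  map_neg _ v

lemma mvE_neg_left {m n : ℕ} (A : Matrix (Fin m) (Fin n) ℝ) (v : Evec n) :
    mvE (-A) v = -mvE A v := by
  simp [mvE]

lemma mvE_injective {m n : ℕ} : Function.Injective (mvE : Matrix (Fin m) (Fin n) ℝ → _) :=
  fun _ _ h ↦ Matrix.toEuclideanLin.injective (LinearMap.ext (congrFun h))

lemma ContinuousMultilinearMap.map_neg_fin_two_left {E G : Type*}
    [NormedAddCommGroup E] [NormedSpace ℝ E] [NormedAddCommGroup G] [NormedSpace ℝ G]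
    (B : ContinuousMultilinearMap ℝ (fun _ : Fin 2 ↦ E) G) (w z : E) :
    B ![-w, z] = -B ![w, z] := by
  have h := B.toMultilinearMap.map_update_neg ![w, z] 0 w
  rwa [Matrix.vecCons, Fin.update_cons_zero, Fin.update_cons_zero] at h

lemma Nperp'_neg_right {m n : ℕ} (A Hw : Matrix (Fin m) (Fin n) ℝ) :
    Nperp' A (-Hw) = -Nperp' A Hw := by
  rw [Nperp', Nperp', Matrix.mul_neg, Matrix.neg_mul]

lemma Npar'_neg_right {m n : ℕ} (A Hw : Matrix (Fin m) (Fin n) ℝ) :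
    Npar' A (-Hw) = -Npar' A Hw := by
  rw [Npar', Nperp'_neg_right, Matrix.transpose_neg, Npar']

/-- The velocity field is quadratic in `v`: `v` enters once linearly and once through `H[·, ·]`. -/
lemma hugVField_neg {m n : ℕ} (J : Evec n → Matrix (Fin m) (Fin n) ℝ)
    {Hm : Evec n → Evec n → Matrix (Fin m) (Fin n) ℝ} (hHm : ∀ x w, Hm x (-w) = -Hm x w)
    (x v : Evec n) : hugVField J Hm x (-v) = hugVField J Hm x v := by
  rw [hugVField, hugVField, mvE_neg (Tproj _ - Nproj _), hHm, Npar'_neg_right, Nperp'_neg_right,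
    neg_sub_neg, ← neg_sub, mvE_neg_left, mvE_neg, neg_neg]

theorem hug_ode_time_reversible_general
    (m n : ℕ)
    (f : Evec n → Evec m)
    (J : Evec n → Matrix (Fin m) (Fin n) ℝ)
    (Hm : Evec n → Evec n → Matrix (Fin m) (Fin n) ℝ)
    (hHm : ∀ (x w z : Evec n), mvE (Hm x w) z = iteratedFDeriv ℝ 2 f x ![w, z])
    (I : Set ℝ) (x v : ℝ → Evec n)
    (hx : ∀ t ∈ I, HasDerivAt x (mvE (Tproj (J (x t))) (v t)) t)
    (hv : ∀ t ∈ I, HasDerivAt v (hugVField J Hm (x t) (v t)) t)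
    :
    ∀ t : ℝ, t ∈ (fun s : ℝ => -s) '' I →
      HasDerivAt (fun s : ℝ => x (-s))
        (mvE (Tproj (J (x (-t)))) (-v (-t))) t ∧
      HasDerivAt (fun s : ℝ => -v (-s))
        (hugVField J Hm (x (-t)) (-v (-t))) t := by
  have hHm_neg : ∀ p w, Hm p (-w) = -Hm p w := fun p w ↦
    mvE_injective <| funext fun z ↦ by
      rw [hHm, mvE_neg_left, hHm, ContinuousMultilinearMap.map_neg_fin_two_left]
  rintro _ ⟨t, ht, rfl⟩
  simp only [neg_neg]
  refine ⟨?_, ?_⟩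
  · rw [mvE_neg]
    exact (hx t ht).comp_neg
  · rw [hugVField_neg J hHm_neg]
    have h := (hv t ht).comp_neg.neg
    rwa [neg_neg] at h

theorem hug_ode_time_reversible
    (m n : ℕ) (hm : 0 < m) (hmn : m < n)
    (f : Evec n → Evec m) (hf : ContDiff ℝ (⊤ : ℕ∞) f)
    (J : Evec n → Matrix (Fin m) (Fin n) ℝ)
    (hJ : ∀ x, HasFDerivAt f
      (LinearMap.toContinuousLinearMap (Matrix.toEuclideanLin (J x))) x)
    (hrank : ∀ x, (J x).rank = m)
    (Hm : Evec n → Evec n → Matrix (Fin m) (Fin n) ℝ)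
    (hHm : ∀ (x w z : Evec n), mvE (Hm x w) z = iteratedFDeriv ℝ 2 f x ![w, z])
    (I : Set ℝ) (x v : ℝ → Evec n)
    (hx : ∀ t ∈ I, HasDerivAt x (mvE (Tproj (J (x t))) (v t)) t)
    (hv : ∀ t ∈ I, HasDerivAt v (hugVField J Hm (x t) (v t)) t)
    :
    ∀ t : ℝ, t ∈ (fun s : ℝ => -s) '' I →
      HasDerivAt (fun s : ℝ => x (-s))
        (mvE (Tproj (J (x (-t)))) (-v (-t))) t ∧
      HasDerivAt (fun s : ℝ => -v (-s))
        (hugVField J Hm (x (-t)) (-v (-t))) t :=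
  hug_ode_time_reversible_general m n f J Hm hHm I x v hx hv
end
end

section
/- Along any solution (x(t), v(t)) of the Hug ODE, the Euclidean norm of the velocity is conserved: ‖v(t)‖ = ‖v(0)‖ for all t in the interval of existence. -/
open Matrix MeasureTheory

noncomputable section

/- The velocity is driven by `N′_∥[w] - N′_⊥[w] = Bᵀ - B` with `B = N′_⊥[w]`, a skew-symmetric
matrix, so `d‖v‖²/dt = 2⟪v, (Bᵀ - B) v⟫ = 0`. -/

lemma inner_mvE_left {n : ℕ} (M : Matrix (Fin n) (Fin n) ℝ) (x y : Evec n) :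
    inner ℝ (mvE M x) y = (inner ℝ x (mvE Mᵀ y) : ℝ) := by
  have h := Matrix.toEuclideanLin_conjTranspose_eq_adjoint M
  rw [Matrix.conjTranspose_eq_transpose_of_trivial] at h
  simp only [mvE, h, LinearMap.adjoint_inner_right]

lemma inner_self_mvE_eq_zero_of_transpose_eq_neg {n : ℕ} {M : Matrix (Fin n) (Fin n) ℝ}
    (hM : Mᵀ = -M) (v : Evec n) : (inner ℝ v (mvE M v) : ℝ) = 0 := by
  have h := inner_mvE_left M v v
  rw [hM, real_inner_comm] at h
  simp only [mvE, map_neg, LinearMap.neg_apply, inner_neg_right] at h ⊢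
  linarith

lemma inner_self_hugVField {m n : ℕ} (J : Evec n → Matrix (Fin m) (Fin n) ℝ)
    (Hm : Evec n → Evec n → Matrix (Fin m) (Fin n) ℝ) (x v : Evec n) :
    (inner ℝ v (hugVField J Hm x v) : ℝ) = 0 :=
  inner_self_mvE_eq_zero_of_transpose_eq_neg
    (by rw [Npar', transpose_sub, transpose_transpose, neg_sub]) v

lemma Convex.norm_eq_of_inner_hasDerivAt_eq_zero {E : Type*} [NormedAddCommGroup E]
    [InnerProductSpace ℝ E] {I : Set ℝ} (hI : Convex ℝ I) {v v' : ℝ → E}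
    (hv : ∀ t ∈ I, HasDerivAt v (v' t) t) (horth : ∀ t ∈ I, (inner ℝ (v t) (v' t) : ℝ) = 0)
    {s t : ℝ} (hs : s ∈ I) (ht : t ∈ I) : ‖v t‖ = ‖v s‖ := by
  have hderiv : ∀ r ∈ I, HasDerivWithinAt (‖v ·‖ ^ 2) 0 I r := fun r hr => by
    simpa [horth r hr] using ((hv r hr).norm_sq).hasDerivWithinAt
  have hsq : ‖‖v t‖ ^ 2 - ‖v s‖ ^ 2‖ ≤ 0 * ‖t - s‖ :=
    hI.norm_image_sub_le_of_norm_hasDerivWithin_le (f' := fun _ => 0) hderiv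
      (fun _ _ => by simp) hs ht
  rw [zero_mul, norm_le_zero_iff, sub_eq_zero] at hsq
  exact (sq_eq_sq₀ (norm_nonneg _) (norm_nonneg _)).mp hsq

theorem hug_ode_conserves_speed_general
    (m n : ℕ)
    (J : Evec n → Matrix (Fin m) (Fin n) ℝ)
    (Hm : Evec n → Evec n → Matrix (Fin m) (Fin n) ℝ)
    (I : Set ℝ) (x v : ℝ → Evec n)
    (hv : ∀ t ∈ I, HasDerivAt v (hugVField J Hm (x t) (v t)) t)
    (hI : Convex ℝ I) (h0 : (0 : ℝ) ∈ I) :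
    ∀ t ∈ I, ‖v t‖ = ‖v 0‖ := fun _ ht =>
  hI.norm_eq_of_inner_hasDerivAt_eq_zero hv
    (fun t _ => inner_self_hugVField J Hm (x t) (v t)) h0 ht

theorem hug_ode_conserves_speed
    (m n : ℕ) (hm : 0 < m) (hmn : m < n)
    (f : Evec n → Evec m) (hf : ContDiff ℝ (⊤ : ℕ∞) f)
    (J : Evec n → Matrix (Fin m) (Fin n) ℝ)
    (hJ : ∀ x, HasFDerivAt f
      (LinearMap.toContinuousLinearMap (Matrix.toEuclideanLin (J x))) x)
    (hrank : ∀ x, (J x).rank = m)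
    (Hm : Evec n → Evec n → Matrix (Fin m) (Fin n) ℝ)
    (hHm : ∀ (x w z : Evec n), mvE (Hm x w) z = iteratedFDeriv ℝ 2 f x ![w, z])
    (I : Set ℝ) (x v : ℝ → Evec n)
    (hx : ∀ t ∈ I, HasDerivAt x (mvE (Tproj (J (x t))) (v t)) t)
    (hv : ∀ t ∈ I, HasDerivAt v (hugVField J Hm (x t) (v t)) t)
    (hI : Convex ℝ I) (h0 : (0 : ℝ) ∈ I) :
    ∀ t ∈ I, ‖v t‖ = ‖v 0‖ :=
  hug_ode_conserves_speed_general m n J Hm I x v hv hI h0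
end
end

section
/- Along any solution (x(t), v(t)) of the Hug ODE, the quantity f(x(t)) is conserved: f(x(t)) = f(x(0)) for all t in the interval of existence, i.e. x(t) remains on the level manifold {y : f(y) = f(x(0))}. -/
/-!
The position equation moves `x` only along `T(x) v`, which lies in `ker J(x)`: full rank makes
`J Jᵀ` invertible, so `J N = J Jᵀ (J Jᵀ)⁻¹ J = J` and `J T = 0`. Hence `t ↦ f (x t)` has zero
derivative, and it is constant on the (convex) interval of existence.
-/

open Matrix MeasureTheory

noncomputable section

theorem Matrix.isUnit_of_rank_eq_card_s13 {K ι : Type*} [Field K] [Fintype ι] [DecidableEq ι]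
    (B : Matrix ι ι K) (h : B.rank = Fintype.card ι) : IsUnit B := by
  rw [← Matrix.mulVec_surjective_iff_isUnit]
  have hrange : LinearMap.range B.mulVecLin = ⊤ :=
    Submodule.eq_top_of_finrank_eq (by rw [← Matrix.rank, h, Module.finrank_fintype_fun_eq_card])
  exact LinearMap.range_eq_top.mp hrange

theorem mul_Tproj_eq_zero {m n : ℕ} (A : Matrix (Fin m) (Fin n) ℝ) (h : A.rank = m) :
    A * Tproj A = 0 := by
  have hunit : IsUnit (A * Aᵀ).det := by
    rw [← Matrix.isUnit_iff_isUnit_det]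
    refine Matrix.isUnit_of_rank_eq_card_s13 _ ?_
    rw [Matrix.rank_self_mul_transpose, h, Fintype.card_fin]
  have hproj : A * Nproj A = A := by
    rw [Nproj, pinv, ← Matrix.mul_assoc, ← Matrix.mul_assoc, Matrix.mul_nonsing_inv _ hunit,
      Matrix.one_mul]
  rw [Tproj, Matrix.mul_sub, Matrix.mul_one, hproj, sub_self]

theorem mvE_mvE_Tproj_eq_zero {m n : ℕ} (A : Matrix (Fin m) (Fin n) ℝ) (h : A.rank = m)
    (v : Evec n) : mvE A (mvE (Tproj A) v) = 0 := by
  have hcomp : mvE A (mvE (Tproj A) v) = mvE (A * Tproj A) v := by simp [mvE]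
  rw [hcomp, mul_Tproj_eq_zero A h, mvE, map_zero, LinearMap.zero_apply]

theorem Convex.comp_eq_of_fderiv_apply_velocity_eq_zero {E F : Type*} [NormedAddCommGroup E]
    [NormedSpace ℝ E] [NormedAddCommGroup F] [NormedSpace ℝ F] {I : Set ℝ} (hI : Convex ℝ I)
    {f : E → F} {f' : E → E →L[ℝ] F} {γ γ' : ℝ → E}
    (hf : ∀ t ∈ I, HasFDerivAt f (f' (γ t)) (γ t)) (hγ : ∀ t ∈ I, HasDerivAt γ (γ' t) t)
    (htangent : ∀ t ∈ I, f' (γ t) (γ' t) = 0) {s t : ℝ} (hs : s ∈ I) (ht : t ∈ I) :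
    f (γ t) = f (γ s) := by
  have hderiv : ∀ u ∈ I, HasDerivWithinAt (f ∘ γ) 0 I u := fun u hu => by
    simpa only [htangent u hu] using ((hf u hu).comp_hasDerivAt u (hγ u hu)).hasDerivWithinAt
  have hle := hI.norm_image_sub_le_of_norm_hasDerivWithin_le hderiv
    (fun _ _ => norm_zero.le) hs ht
  rwa [zero_mul, norm_le_zero_iff, sub_eq_zero] at hle

theorem hug_ode_stays_on_level_set_general
    (m n : ℕ)
    (f : Evec n → Evec m)
    (J : Evec n → Matrix (Fin m) (Fin n) ℝ)
    (hJ : ∀ x, HasFDerivAt f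
      (LinearMap.toContinuousLinearMap (Matrix.toEuclideanLin (J x))) x)
    (hrank : ∀ x, (J x).rank = m)
    (I : Set ℝ) (x v : ℝ → Evec n)
    (hx : ∀ t ∈ I, HasDerivAt x (mvE (Tproj (J (x t))) (v t)) t)
    (hI : Convex ℝ I) (h0 : (0 : ℝ) ∈ I) :
    ∀ t ∈ I, f (x t) = f (x 0) := by
  intro t ht
  exact hI.comp_eq_of_fderiv_apply_velocity_eq_zero
    (f' := fun y => LinearMap.toContinuousLinearMap (Matrix.toEuclideanLin (J y)))
    (fun u _ => hJ (x u)) hx (fun u _ => mvE_mvE_Tproj_eq_zero _ (hrank (x u)) (v u)) h0 ht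

theorem hug_ode_stays_on_level_set
    (m n : ℕ) (hm : 0 < m) (hmn : m < n)
    (f : Evec n → Evec m) (hf : ContDiff ℝ (⊤ : ℕ∞) f)
    (J : Evec n → Matrix (Fin m) (Fin n) ℝ)
    (hJ : ∀ x, HasFDerivAt f
      (LinearMap.toContinuousLinearMap (Matrix.toEuclideanLin (J x))) x)
    (hrank : ∀ x, (J x).rank = m)
    (Hm : Evec n → Evec n → Matrix (Fin m) (Fin n) ℝ)
    (hHm : ∀ (x w z : Evec n), mvE (Hm x w) z = iteratedFDeriv ℝ 2 f x ![w, z])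
    (I : Set ℝ) (x v : ℝ → Evec n)
    (hx : ∀ t ∈ I, HasDerivAt x (mvE (Tproj (J (x t))) (v t)) t)
    (hv : ∀ t ∈ I, HasDerivAt v (hugVField J Hm (x t) (v t)) t)
    (hI : Convex ℝ I) (h0 : (0 : ℝ) ∈ I) :
    ∀ t ∈ I, f (x t) = f (x 0) :=
  hug_ode_stays_on_level_set_general m n f J hJ hrank I x v hx hI h0
end
end

section
/- If (x(t), v(t)) is a solution of the Hug ODE, then the normal velocity component v_⊥(t) = N(x(t))v(t) satisfies d/dt v_⊥ = N′_∥(x)[v_∥]v_⊥ + N′_⊥(x)[v_⊥]v_∥, where v_∥(t) = T(x(t))v(t). -/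
/-!
Differentiating `v_⊥ = N(x) v` along the flow gives `N′[ẋ] v + N v̇` with `ẋ = v_∥`. Differentiating
`N = Jᵀ(JJᵀ)⁻¹J` entrywise yields the Golub–Pereyra formula `N′[w] = N′_∥[w] + N′_⊥[w]`. Since `N`
annihilates every `N′_∥[·]` and fixes every `N′_⊥[·]`, the Hug equation gives
`N v̇ = -N′_⊥[v_∥ - v_⊥] v`, which cancels `N′_⊥[v_∥] v` down to `N′_⊥[v_⊥] v`; finally
`N′_∥[·] v = N′_∥[·] v_⊥` and `N′_⊥[·] v = N′_⊥[·] v_∥`.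
-/

open Matrix MeasureTheory

noncomputable section

section EntrywiseDeriv

variable {𝕜 : Type*} [NontriviallyNormedField 𝕜] {ι κ μ : Type*}

def HasEntrywiseDerivAt (M : 𝕜 → Matrix ι κ 𝕜) (M' : Matrix ι κ 𝕜) (t : 𝕜) : Prop :=
  ∀ i j, HasDerivAt (fun s => M s i j) (M' i j) t

theorem differentiableAt_det_of_entrywise [Fintype ι] [DecidableEq ι] {M : 𝕜 → Matrix ι ι 𝕜}
    {t : 𝕜} (h : ∀ i j, DifferentiableAt 𝕜 (fun s => M s i j) t) :
    DifferentiableAt 𝕜 (fun s => (M s).det) t := by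
  simp only [det_apply']
  exact .fun_sum fun σ _ => .const_mul (.fun_finsetProd fun i _ => h (σ i) i) _

theorem differentiableAt_inv_apply_of_entrywise [Fintype ι] [DecidableEq ι]
    {M : 𝕜 → Matrix ι ι 𝕜} {t : 𝕜} (h : ∀ i j, DifferentiableAt 𝕜 (fun s => M s i j) t)
    (hdet : (M t).det ≠ 0) (i j : ι) :
    DifferentiableAt 𝕜 (fun s => (M s)⁻¹ i j) t := by
  have hadj : DifferentiableAt 𝕜 (fun s => (M s).adjugate i j) t := by
    simp only [adjugate_apply]
    refine differentiableAt_det_of_entrywise fun k l => ?_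
    by_cases hk : k = j <;> simp [updateRow_apply, hk, h]
  have hcramer : (fun s => (M s)⁻¹ i j) = fun s => ((M s).det)⁻¹ * (M s).adjugate i j := by
    funext s
    simp [inv_def, Ring.inverse_eq_inv']
  rw [hcramer]
  exact ((differentiableAt_det_of_entrywise h).inv hdet).mul hadj

namespace HasEntrywiseDerivAt

variable {M : 𝕜 → Matrix ι κ 𝕜} {M' : Matrix ι κ 𝕜} {t : 𝕜}

theorem unique {M'' : Matrix ι κ 𝕜} (h : HasEntrywiseDerivAt M M' t)
    (h' : HasEntrywiseDerivAt M M'' t) : M' = M'' := by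
  ext i j
  exact (h i j).unique (h' i j)

theorem transpose (h : HasEntrywiseDerivAt M M' t) :
    HasEntrywiseDerivAt (fun s => (M s)ᵀ) M'ᵀ t :=
  fun i j => h j i

theorem mul [Fintype κ] {P : 𝕜 → Matrix κ μ 𝕜} {P' : Matrix κ μ 𝕜}
    (hM : HasEntrywiseDerivAt M M' t) (hP : HasEntrywiseDerivAt P P' t) :
    HasEntrywiseDerivAt (fun s => M s * P s) (M' * P t + M t * P') t := fun i j => by
  have : HasDerivAt (fun s => ∑ k, M s i k * P s k j)
      (∑ k, (M' i k * P t k j + M t i k * P' k j)) t :=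
    .fun_sum fun k _ => (hM i k).mul (hP k j)
  simpa only [mul_apply, Matrix.add_apply, Finset.sum_add_distrib] using this

/-- Once the inverse is known to be differentiable (Cramer's rule), its derivative is read off
from differentiating `M * M⁻¹ = 1`. -/
theorem inv [Fintype ι] [DecidableEq ι] {M : 𝕜 → Matrix ι ι 𝕜} {M' : Matrix ι ι 𝕜}
    (hM : HasEntrywiseDerivAt M M' t) (hu : IsUnit (M t).det) :
    HasEntrywiseDerivAt (fun s => (M s)⁻¹) (-((M t)⁻¹ * M' * (M t)⁻¹)) t := by
  have hdiff := fun i j => (hM i j).differentiableAt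
  set K : Matrix ι ι 𝕜 := of fun i j => deriv (fun s => (M s)⁻¹ i j) t
  have hK : HasEntrywiseDerivAt (fun s => (M s)⁻¹) K t := fun i j =>
    (differentiableAt_inv_apply_of_entrywise hdiff hu.ne_zero i j).hasDerivAt
  have hone : ∀ᶠ s in nhds t, M s * (M s)⁻¹ = 1 := by
    filter_upwards [(differentiableAt_det_of_entrywise hdiff).continuousAt.eventually_ne
      hu.ne_zero] with s hs
    exact mul_nonsing_inv _ hs.isUnit
  have hconst : HasEntrywiseDerivAt (fun s => M s * (M s)⁻¹) 0 t := fun i j =>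
    (hasDerivAt_const t ((1 : Matrix ι ι 𝕜) i j)).congr_of_eventuallyEq
      (hone.mono fun s hs => by simp only [hs])
  have hsum : M' * (M t)⁻¹ + M t * K = 0 := (hM.mul hK).unique hconst
  have hK_eq : K = -((M t)⁻¹ * M' * (M t)⁻¹) := by
    have := congrArg ((M t)⁻¹ * ·) hsum
    simp only [mul_add, ← mul_assoc, nonsing_inv_mul _ hu, one_mul, mul_zero] at this
    rw [eq_neg_iff_add_eq_zero, add_comm, this]
  rwa [← hK_eq]

end HasEntrywiseDerivAt

end EntrywiseDeriv

theorem hasDerivAt_euclideanSpace_iff {ι : Type*} [Fintype ι] {f : ℝ → EuclideanSpace ℝ ι}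
    {f' : EuclideanSpace ℝ ι} {t : ℝ} :
    HasDerivAt f f' t ↔ ∀ i, HasDerivAt (fun s => f s i) (f' i) t := by
  let e := EuclideanSpace.equiv ι ℝ
  constructor
  · intro h i
    exact (EuclideanSpace.proj i).hasFDerivAt.comp_hasDerivAt t h
  · intro h
    have hcomp := (e.symm : (ι → ℝ) →L[ℝ] EuclideanSpace ℝ ι).hasFDerivAt.comp_hasDerivAt t
      (hasDerivAt_pi.2 h : HasDerivAt (fun s => e (f s)) (e f') t)
    have hf : ((e.symm : (ι → ℝ) →L[ℝ] EuclideanSpace ℝ ι) ∘ fun s => e (f s)) = f := by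
      funext s
      simp
    rwa [hf] at hcomp

section mvE

variable {k m n : ℕ}

theorem mvE_apply (A : Matrix (Fin m) (Fin n) ℝ) (v : Evec n) (i : Fin m) :
    mvE A v i = ∑ j, A i j * v j := by
  simp [mvE, mulVec, dotProduct]

theorem mvE_single (A : Matrix (Fin m) (Fin n) ℝ) (i : Fin m) (j : Fin n) :
    mvE A (EuclideanSpace.single j 1) i = A i j := by
  simp [mvE_apply]

theorem mvE_mul (A : Matrix (Fin m) (Fin n) ℝ) (B : Matrix (Fin n) (Fin k) ℝ) (v : Evec k) :
    mvE (A * B) v = mvE A (mvE B v) := by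
  simp [mvE]

theorem mvE_add (A B : Matrix (Fin m) (Fin n) ℝ) (v : Evec n) :
    mvE (A + B) v = mvE A v + mvE B v := by
  simp [mvE]

theorem mvE_sub (A B : Matrix (Fin m) (Fin n) ℝ) (v : Evec n) :
    mvE (A - B) v = mvE A v - mvE B v := by
  simp [mvE]

theorem HasEntrywiseDerivAt.mvE {M : ℝ → Matrix (Fin m) (Fin n) ℝ} {M' : Matrix (Fin m) (Fin n) ℝ}
    {u : ℝ → Evec n} {u' : Evec n} {t : ℝ} (hM : HasEntrywiseDerivAt M M' t)
    (hu : HasDerivAt u u' t) :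
    HasDerivAt (fun s => mvE (M s) (u s)) (mvE M' (u t) + mvE (M t) u') t := by
  refine hasDerivAt_euclideanSpace_iff.2 fun i => ?_
  have hu' := hasDerivAt_euclideanSpace_iff.1 hu
  have : HasDerivAt (fun s => ∑ j, M s i j * u s j) (∑ j, (M' i j * u t j + M t i j * u' j)) t :=
    .fun_sum fun j _ => (hM i j).mul (hu' j)
  simpa only [mvE_apply, PiLp.add_apply, Finset.sum_add_distrib] using this

end mvE

section SecondDerivative

variable {m n : ℕ} {f : Evec n → Evec m} {x : Evec n} {H : Evec n → Matrix (Fin m) (Fin n) ℝ}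

theorem apply_eq_fderiv_fderiv_of_mvE_eq
    (hH : ∀ w z, mvE (H w) z = iteratedFDeriv ℝ 2 f x ![w, z]) (w : Evec n) (i : Fin m)
    (j : Fin n) : H w i j = fderiv ℝ (fderiv ℝ f) x w (EuclideanSpace.single j 1) i := by
  rw [← mvE_single (H w) i j, hH, iteratedFDeriv_two_apply]
  simp

theorem map_sub_of_mvE_eq (hH : ∀ w z, mvE (H w) z = iteratedFDeriv ℝ 2 f x ![w, z])
    (a b : Evec n) : H (a - b) = H a - H b := by
  ext i j
  simp [apply_eq_fderiv_fderiv_of_mvE_eq hH]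

theorem hasEntrywiseDerivAt_jacobian_comp (hf : ContDiff ℝ 2 f)
    {J : Evec n → Matrix (Fin m) (Fin n) ℝ}
    (hJ : ∀ y, HasFDerivAt f (LinearMap.toContinuousLinearMap (toEuclideanLin (J y))) y)
    {γ : ℝ → Evec n} {γ' : Evec n} {t : ℝ} (hγ : HasDerivAt γ γ' t)
    (hH : ∀ w z, mvE (H w) z = iteratedFDeriv ℝ 2 f (γ t) ![w, z]) :
    HasEntrywiseDerivAt (fun s => J (γ s)) (H γ') t := by
  intro i j
  have hf' : HasFDerivAt (fderiv ℝ f) (fderiv ℝ (fderiv ℝ f) (γ t)) (γ t) :=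
    ((hf.fderiv_right (m := 1) le_rfl).differentiable one_ne_zero _).hasFDerivAt
  have hDf := (hf'.comp_hasDerivAt t hγ).clm_apply (hasDerivAt_const t (EuclideanSpace.single j 1))
  have hentry := (EuclideanSpace.proj i).hasFDerivAt.comp_hasDerivAt t hDf
  have hfun : (fun s => J (γ s) i j)
      = EuclideanSpace.proj i ∘ fun s => (fderiv ℝ f ∘ γ) s (EuclideanSpace.single j 1) := by
    funext s
    rw [Function.comp_apply, Function.comp_apply, (hJ (γ s)).fderiv, ← mvE_single (J (γ s)) i j]
    rfl
  rw [hfun, apply_eq_fderiv_fderiv_of_mvE_eq hH]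
  simpa using hentry

end SecondDerivative

theorem isUnit_det_mul_transpose_of_rank_eq {ι κ R : Type*} [Fintype ι] [Fintype κ]
    [DecidableEq ι] [Field R] [LinearOrder R] [IsStrictOrderedRing R] {A : Matrix ι κ R}
    (h : A.rank = Fintype.card ι) : IsUnit (A * Aᵀ).det := by
  rw [← isUnit_iff_isUnit_det, ← mulVec_surjective_iff_isUnit, ← coe_mulVecLin,
    ← LinearMap.range_eq_top]
  apply Submodule.eq_top_of_finrank_eq
  rw [← rank, rank_self_mul_transpose, h, Module.finrank_fintype_fun_eq_card]

section Projections

variable {m n : ℕ} (A : Matrix (Fin m) (Fin n) ℝ)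

theorem transpose_inv_mul_transpose : ((A * Aᵀ)⁻¹)ᵀ = (A * Aᵀ)⁻¹ := by
  rw [transpose_nonsing_inv, transpose_mul, transpose_transpose]

theorem Nproj_transpose : (Nproj A)ᵀ = Nproj A := by
  simp only [Nproj, pinv, transpose_mul, transpose_transpose, transpose_inv_mul_transpose,
    Matrix.mul_assoc]

theorem Tproj_transpose : (Tproj A)ᵀ = Tproj A := by
  rw [Tproj, transpose_sub, transpose_one, Nproj_transpose]

theorem Nperp'_sub (X Y : Matrix (Fin m) (Fin n) ℝ) :
    Nperp' A (X - Y) = Nperp' A X - Nperp' A Y := by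
  rw [Nperp', Nperp', Nperp', Matrix.mul_sub, Matrix.sub_mul]

variable {A}

theorem mul_pinv (hA : IsUnit (A * Aᵀ).det) : A * pinv A = 1 := by
  rw [pinv, ← Matrix.mul_assoc, mul_nonsing_inv _ hA]

theorem Nproj_mul_pinv (hA : IsUnit (A * Aᵀ).det) : Nproj A * pinv A = pinv A := by
  rw [Nproj, Matrix.mul_assoc, mul_pinv hA, Matrix.mul_one]

theorem mul_Tproj (hA : IsUnit (A * Aᵀ).det) : A * Tproj A = 0 := by
  rw [Tproj, Nproj, Matrix.mul_sub, Matrix.mul_one, ← Matrix.mul_assoc, mul_pinv hA,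
    Matrix.one_mul, sub_self]

theorem Nproj_mul_Tproj (hA : IsUnit (A * Aᵀ).det) : Nproj A * Tproj A = 0 := by
  rw [Nproj, Matrix.mul_assoc, mul_Tproj hA, Matrix.mul_zero]

theorem Tproj_mul_Tproj (hA : IsUnit (A * Aᵀ).det) : Tproj A * Tproj A = Tproj A := by
  nth_rw 1 [Tproj]
  rw [Matrix.sub_mul, Matrix.one_mul, Nproj_mul_Tproj hA, sub_zero]

theorem Nproj_mul_Npar' (hA : IsUnit (A * Aᵀ).det) (X : Matrix (Fin m) (Fin n) ℝ) :
    Nproj A * Npar' A X = 0 := by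
  rw [Npar', Nperp', transpose_mul, transpose_mul, Tproj_transpose, ← Matrix.mul_assoc,
    ← Matrix.mul_assoc, Nproj_mul_Tproj hA, Matrix.zero_mul, Matrix.zero_mul]

theorem Nproj_mul_Nperp' (hA : IsUnit (A * Aᵀ).det) (X : Matrix (Fin m) (Fin n) ℝ) :
    Nproj A * Nperp' A X = Nperp' A X := by
  rw [Nperp', ← Matrix.mul_assoc, ← Matrix.mul_assoc, Nproj_mul_pinv hA]

theorem Npar'_mul_Nproj (hA : IsUnit (A * Aᵀ).det) (X : Matrix (Fin m) (Fin n) ℝ) :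
    Npar' A X * Nproj A = Npar' A X := by
  rw [Npar', ← Nproj_transpose, ← transpose_mul, Nproj_mul_Nperp' hA]

theorem Nperp'_mul_Tproj (hA : IsUnit (A * Aᵀ).det) (X : Matrix (Fin m) (Fin n) ℝ) :
    Nperp' A X * Tproj A = Nperp' A X := by
  rw [Nperp', Matrix.mul_assoc, Tproj_mul_Tproj hA]

/-- The Golub–Pereyra formula `N′[H] = N′_∥[H] + N′_⊥[H]`; expanding the product rule, only the
symmetry of `(A Aᵀ)⁻¹` is needed. -/
theorem HasEntrywiseDerivAt.Nproj {M : ℝ → Matrix (Fin m) (Fin n) ℝ}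
    {H : Matrix (Fin m) (Fin n) ℝ} {t : ℝ} (hM : HasEntrywiseDerivAt M H t)
    (hu : IsUnit (M t * (M t)ᵀ).det) :
    HasEntrywiseDerivAt (fun s => Nproj (M s)) (Npar' (M t) H + Nperp' (M t) H) t := by
  have hN := (hM.transpose.mul ((hM.mul hM.transpose).inv hu)).mul hM
  convert hN using 1
  · rfl
  simp only [Npar', Nperp', Tproj, _root_.Nproj, pinv, transpose_mul, transpose_transpose,
    transpose_sub, transpose_inv_mul_transpose, Matrix.mul_sub, Matrix.mul_add, Matrix.add_mul,
    Matrix.mul_one, Matrix.mul_neg, Matrix.neg_mul, Matrix.mul_assoc]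
  abel

end Projections

theorem hug_ode_normal_velocity_derivative_general
    (m n : ℕ)
    (f : Evec n → Evec m) (hf : ContDiff ℝ (⊤ : ℕ∞) f)
    (J : Evec n → Matrix (Fin m) (Fin n) ℝ)
    (hJ : ∀ x, HasFDerivAt f
      (LinearMap.toContinuousLinearMap (Matrix.toEuclideanLin (J x))) x)
    (hrank : ∀ x, (J x).rank = m)
    (Hm : Evec n → Evec n → Matrix (Fin m) (Fin n) ℝ)
    (hHm : ∀ (x w z : Evec n), mvE (Hm x w) z = iteratedFDeriv ℝ 2 f x ![w, z])
    (I : Set ℝ) (x v : ℝ → Evec n)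
    (hx : ∀ t ∈ I, HasDerivAt x (mvE (Tproj (J (x t))) (v t)) t)
    (hv : ∀ t ∈ I, HasDerivAt v (hugVField J Hm (x t) (v t)) t)
    :
    ∀ t ∈ I,
      HasDerivAt (fun s : ℝ => mvE (Nproj (J (x s))) (v s))
        (mvE (Npar' (J (x t)) (Hm (x t) (mvE (Tproj (J (x t))) (v t))))
            (mvE (Nproj (J (x t))) (v t))
          + mvE (Nperp' (J (x t)) (Hm (x t) (mvE (Nproj (J (x t))) (v t))))
            (mvE (Tproj (J (x t))) (v t))) t := by
  intro t ht
  set A := J (x t)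
  set H₁ := Hm (x t) (mvE (Tproj A) (v t))
  set H₂ := Hm (x t) (mvE (Nproj A) (v t))
  have hu : IsUnit (A * Aᵀ).det :=
    isUnit_det_mul_transpose_of_rank_eq (by rw [hrank, Fintype.card_fin])
  have hN : HasEntrywiseDerivAt (fun s => Nproj (J (x s))) (Npar' A H₁ + Nperp' A H₁) t :=
    (hasEntrywiseDerivAt_jacobian_comp (hf.of_le (WithTop.coe_le_coe.2 le_top)) hJ (hx t ht)
      (hHm (x t))).Nproj hu
  have hH : Hm (x t) (mvE (Tproj A - Nproj A) (v t)) = H₁ - H₂ := by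
    rw [mvE_sub, map_sub_of_mvE_eq (hHm (x t))]
  convert hN.mvE (hv t ht) using 1
  rw [hugVField, hH, ← mvE_mul, ← mvE_mul, ← mvE_mul, ← mvE_add, ← mvE_add]
  congr 1
  rw [Matrix.mul_sub, Nproj_mul_Npar' hu, Nproj_mul_Nperp' hu, Npar'_mul_Nproj hu,
    Nperp'_mul_Tproj hu, Nperp'_sub]
  abel

theorem hug_ode_normal_velocity_derivative
    (m n : ℕ) (hm : 0 < m) (hmn : m < n)
    (f : Evec n → Evec m) (hf : ContDiff ℝ (⊤ : ℕ∞) f)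
    (J : Evec n → Matrix (Fin m) (Fin n) ℝ)
    (hJ : ∀ x, HasFDerivAt f
      (LinearMap.toContinuousLinearMap (Matrix.toEuclideanLin (J x))) x)
    (hrank : ∀ x, (J x).rank = m)
    (Hm : Evec n → Evec n → Matrix (Fin m) (Fin n) ℝ)
    (hHm : ∀ (x w z : Evec n), mvE (Hm x w) z = iteratedFDeriv ℝ 2 f x ![w, z])
    (I : Set ℝ) (x v : ℝ → Evec n)
    (hx : ∀ t ∈ I, HasDerivAt x (mvE (Tproj (J (x t))) (v t)) t)
    (hv : ∀ t ∈ I, HasDerivAt v (hugVField J Hm (x t) (v t)) t)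
    :
    ∀ t ∈ I,
      HasDerivAt (fun s : ℝ => mvE (Nproj (J (x s))) (v s))
        (mvE (Npar' (J (x t)) (Hm (x t) (mvE (Tproj (J (x t))) (v t))))
            (mvE (Nproj (J (x t))) (v t))
          + mvE (Nperp' (J (x t)) (Hm (x t) (mvE (Nproj (J (x t))) (v t))))
            (mvE (Tproj (J (x t))) (v t))) t :=
  hug_ode_normal_velocity_derivative_general m n f hf J hJ hrank Hm hHm I x v hx hv
end
end
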